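/- arXiv:1304.6233 — 5 statements merged into one kernel-verified Lean document; each statement's English description precedes it below -/
import Mathlib

section
/- Let A = L X be feasible, i.e., Aᵀ lies in the column space of Xᵀ. Then the minimum of rank(L) over all L satisfying A = L X equals rank(A), and the set of minimizers is exactly { L = A X† + U_A S : S is any matrix with S U_X = 0 }, where U_A Σ_A V_Aᵀ is the skinny SVD of A. -/
open Matrix

/-- The nuclear norm of a real matrix: the sum of its singular values,
i.e. the sum of the square roots of the eigenvalues of `Aᵀ * A`. -/
noncomputable def nuclearNorm {m n : Type*} [Fintype m] [Fintype n] [DecidableEq n]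
    (A : Matrix m n ℝ) : ℝ :=
  ∑ i, Real.sqrt ((Matrix.isHermitian_conjTranspose_mul_self A).eigenvalues i)

/-- `P` is the Moore–Penrose pseudo-inverse of `X`. -/
def IsMoorePenroseInv {m n : Type*} [Fintype m] [Fintype n]
    (X : Matrix m n ℝ) (P : Matrix n m ℝ) : Prop :=
  X * P * X = X ∧ P * X * P = P ∧ (X * P)ᵀ = X * P ∧ (P * X)ᵀ = P * X

/-- `(U, σ, V)` is a skinny SVD of `X`: `U` and `V` have orthonormal columns,
`σ` lists the (positive) nonzero singular values, `X = U * diagonal σ * Vᵀ`,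
and the number of columns of `U` and `V` is `rank X`. -/
def IsSkinnySVD {m n r : ℕ} (X : Matrix (Fin m) (Fin n) ℝ)
    (U : Matrix (Fin m) (Fin r) ℝ) (σ : Fin r → ℝ) (V : Matrix (Fin n) (Fin r) ℝ) : Prop :=
  Uᵀ * U = 1 ∧ Vᵀ * V = 1 ∧ (∀ i, 0 < σ i) ∧
    X = U * Matrix.diagonal σ * Vᵀ ∧ r = X.rank

/-!
Since `rank (L X) ≤ rank L`, every solution of `A = L X` has rank at least `rank A`, and
feasibility makes `A X†` a solution of exactly that rank (`A X† X = A`). A solution `L` of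
rank `rank A` has the same column space as `A`, which lies in that of `U_A`, so `L - A X†`
is `U_A S` with `S = U_Aᵀ (L - A X†)`; and `(L - A X†) X = 0` translates into `S U_X = 0`
because the factor `Σ_X V_Xᵀ` in `X = U_X Σ_X V_Xᵀ` has a right inverse. Conversely every
`A X† + U_A S` with `S U_X = 0` solves `A = L X` and has column space inside that of `U_A`,
of dimension `rank A`.
-/

namespace Matrix

variable {R K : Type*} {l m n k : Type*} [Fintype m] [Fintype n] [Fintype k]

theorem range_mulVecLin_mul_le [CommSemiring R] (B : Matrix l m R) (C : Matrix m n R) :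
    LinearMap.range (B * C).mulVecLin ≤ LinearMap.range B.mulVecLin := by
  rw [mulVecLin_mul]
  exact LinearMap.range_comp_le_range _ _

theorem range_mulVecLin_eq_of_eq_mul_of_rank_eq [Field K] [Fintype l] {A : Matrix l n K}
    {L : Matrix l m K} {X : Matrix m n K} (hA : A = L * X) (hrank : L.rank = A.rank) :
    LinearMap.range L.mulVecLin = LinearMap.range A.mulVecLin :=
  (Submodule.eq_of_le_of_finrank_le (hA ▸ range_mulVecLin_mul_le L X) hrank.le).symm

theorem mul_transpose_mul_eq_self_of_range_le [CommSemiring R] [DecidableEq k]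
    {U : Matrix m k R} (hU : Uᵀ * U = 1) {M : Matrix m n R}
    (hM : LinearMap.range M.mulVecLin ≤ LinearMap.range U.mulVecLin) :
    U * (Uᵀ * M) = M := by
  refine ext_iff_mulVec.2 fun v => ?_
  obtain ⟨w, hw⟩ := hM ⟨v, rfl⟩
  change U *ᵥ w = M *ᵥ v at hw
  rw [← mulVec_mulVec, ← mulVec_mulVec, ← hw, mulVec_mulVec _ Uᵀ, hU, one_mulVec]

theorem mul_eq_zero_iff_of_eq_mul_of_mul_eq_one [Semiring R] [DecidableEq k]
    {X : Matrix m n R} {U : Matrix m k R} {B : Matrix k n R} {C : Matrix n k R}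
    (hX : X = U * B) (hBC : B * C = 1) (M : Matrix l m R) : M * X = 0 ↔ M * U = 0 := by
  refine ⟨fun h => ?_, fun h => by rw [hX, ← Matrix.mul_assoc, h, Matrix.zero_mul]⟩
  rw [← Matrix.mul_one (M * U), ← hBC, ← Matrix.mul_assoc, Matrix.mul_assoc M, ← hX, h,
    Matrix.zero_mul]

end Matrix

theorem IsMoorePenroseInv.mul_mul_eq_of_eq_mul {l m n : Type*} [Fintype m] [Fintype n]
    {X : Matrix m n ℝ} {P : Matrix n m ℝ} (hP : IsMoorePenroseInv X P)
    {A : Matrix l n ℝ} {L : Matrix l m ℝ} (hA : A = L * X) : A * P * X = A := by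
  rw [hA, Matrix.mul_assoc, Matrix.mul_assoc, ← Matrix.mul_assoc X, hP.1]

namespace IsSkinnySVD

variable {m n r : ℕ} {X : Matrix (Fin m) (Fin n) ℝ} {U : Matrix (Fin m) (Fin r) ℝ}
  {σ : Fin r → ℝ} {V : Matrix (Fin n) (Fin r) ℝ}

theorem eq_mul (h : IsSkinnySVD X U σ V) : X = U * (diagonal σ * Vᵀ) := by
  rw [← Matrix.mul_assoc]
  exact h.2.2.2.1

theorem mul_eq_zero_iff {p : ℕ} (h : IsSkinnySVD X U σ V) (M : Matrix (Fin p) (Fin m) ℝ) :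
    M * X = 0 ↔ M * U = 0 := by
  refine mul_eq_zero_iff_of_eq_mul_of_mul_eq_one h.eq_mul (C := V * diagonal σ⁻¹) ?_ M
  rw [Matrix.mul_assoc, ← Matrix.mul_assoc Vᵀ, h.2.1, Matrix.one_mul, diagonal_mul_diagonal,
    ← diagonal_one]
  exact congrArg diagonal (funext fun i => mul_inv_cancel₀ (h.2.2.1 i).ne')

theorem range_le (h : IsSkinnySVD X U σ V) :
    LinearMap.range X.mulVecLin ≤ LinearMap.range U.mulVecLin :=
  h.eq_mul ▸ range_mulVecLin_mul_le _ _

theorem rank_mul_le {k : ℕ} (h : IsSkinnySVD X U σ V) (B : Matrix (Fin r) (Fin k) ℝ) :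
    (U * B).rank ≤ X.rank :=
  (rank_mul_le_left U B).trans ((rank_le_width U).trans h.2.2.2.2.le)

end IsSkinnySVD

theorem stmt1_general {p m n r rA : ℕ} (X : Matrix (Fin m) (Fin n) ℝ)
    (A : Matrix (Fin p) (Fin n) ℝ)
    (P : Matrix (Fin n) (Fin m) ℝ) (hP : IsMoorePenroseInv X P)
    (UX : Matrix (Fin m) (Fin r) ℝ) (σX : Fin r → ℝ) (VX : Matrix (Fin n) (Fin r) ℝ)
    (hXsvd : IsSkinnySVD X UX σX VX)
    (UA : Matrix (Fin p) (Fin rA) ℝ) (σA : Fin rA → ℝ) (VA : Matrix (Fin n) (Fin rA) ℝ)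
    (hAsvd : IsSkinnySVD A UA σA VA)
    (hfeas : ∃ L : Matrix (Fin p) (Fin m) ℝ, A = L * X) :
    IsLeast {k : ℕ | ∃ L : Matrix (Fin p) (Fin m) ℝ, A = L * X ∧ L.rank = k} A.rank ∧
    ∀ L : Matrix (Fin p) (Fin m) ℝ,
      (A = L * X ∧ L.rank = A.rank) ↔
        ∃ S : Matrix (Fin rA) (Fin m) ℝ, S * UX = 0 ∧ L = A * P + UA * S := by
  obtain ⟨L₀, hL₀⟩ := hfeas
  have hAPX : A * P * X = A := hP.mul_mul_eq_of_eq_mul hL₀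
  have rank_le : ∀ L : Matrix (Fin p) (Fin m) ℝ, A = L * X → A.rank ≤ L.rank :=
    fun L hL => hL ▸ rank_mul_le_left L X
  refine ⟨⟨⟨A * P, hAPX.symm, ?_⟩, fun k ⟨L, hL, hk⟩ => hk ▸ rank_le L hL⟩,
    fun L => ⟨?_, ?_⟩⟩
  · exact le_antisymm (rank_mul_le_left A P) (rank_le _ hAPX.symm)
  · rintro ⟨hA, hrank⟩
    refine ⟨UAᵀ * (L - A * P), ?_, ?_⟩
    · rw [← hXsvd.mul_eq_zero_iff, Matrix.mul_assoc, Matrix.sub_mul, ← hA, hAPX, sub_self,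
        Matrix.mul_zero]
    · have hL : UA * (UAᵀ * L) = L := mul_transpose_mul_eq_self_of_range_le hAsvd.1
        ((range_mulVecLin_eq_of_eq_mul_of_rank_eq hA hrank).le.trans hAsvd.range_le)
      have hAP : UA * (UAᵀ * (A * P)) = A * P := mul_transpose_mul_eq_self_of_range_le
        hAsvd.1 ((range_mulVecLin_mul_le A P).trans hAsvd.range_le)
      rw [Matrix.mul_sub, Matrix.mul_sub, hL, hAP, add_sub_cancel]
  · rintro ⟨S, hS, rfl⟩
    have hA : A = (A * P + UA * S) * X := by
      rw [Matrix.add_mul, hAPX, Matrix.mul_assoc, (hXsvd.mul_eq_zero_iff S).2 hS,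
        Matrix.mul_zero, add_zero]
    refine ⟨hA, le_antisymm ?_ (rank_le _ hA)⟩
    have hfactor : A * P + UA * S = UA * (diagonal σA * VAᵀ * P + S) := by
      conv_lhs => rw [hAsvd.eq_mul]
      rw [Matrix.mul_add, Matrix.mul_assoc, Matrix.mul_assoc]
    exact hfactor ▸ hAsvd.rank_mul_le _

/-- The minimum of `rank L` over all `L` with `A = L X` equals `rank A`, and the
minimizers are exactly `L = A X† + U_A S` with `S U_X = 0`. -/
theorem stmt1 {p m n r rA : ℕ} (X : Matrix (Fin m) (Fin n) ℝ) (hX : X ≠ 0)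
    (A : Matrix (Fin p) (Fin n) ℝ)
    (P : Matrix (Fin n) (Fin m) ℝ) (hP : IsMoorePenroseInv X P)
    (UX : Matrix (Fin m) (Fin r) ℝ) (σX : Fin r → ℝ) (VX : Matrix (Fin n) (Fin r) ℝ)
    (hXsvd : IsSkinnySVD X UX σX VX)
    (UA : Matrix (Fin p) (Fin rA) ℝ) (σA : Fin rA → ℝ) (VA : Matrix (Fin n) (Fin rA) ℝ)
    (hAsvd : IsSkinnySVD A UA σA VA)
    (hfeas : ∃ L : Matrix (Fin p) (Fin m) ℝ, A = L * X) :
    IsLeast {k : ℕ | ∃ L : Matrix (Fin p) (Fin m) ℝ, A = L * X ∧ L.rank = k} A.rank ∧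
    ∀ L : Matrix (Fin p) (Fin m) ℝ,
      (A = L * X ∧ L.rank = A.rank) ↔
        ∃ S : Matrix (Fin rA) (Fin m) ℝ, S * UX = 0 ∧ L = A * P + UA * S :=
  stmt1_general X A P hP UX σX VX hXsvd UA σA VA hAsvd hfeas
end

section
/- Let W̃ be a square matrix of size rank(X) and let L* be any optimal solution to the subproblem: minimize rank(L) subject to X − X V_X W̃ V_Xᵀ = L X. Then (V_X W̃ V_Xᵀ, L*) is an optimal solution to the original LatLRR problem (minimize rank(Z) + rank(L) subject to X = X Z + L X) if and only if W̃ is idempotent (W̃² = W̃). -/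
open Matrix

/-!
Since `X V Vᵀ = X`, the constraint of the subproblem reads `L X = U Σ (I - W̃) Vᵀ`. Any `L` has
`rank L ≥ rank (L X) = rank (I - W̃)`, and `L = (L* X) X†` attains this bound, so
`rank L* = rank (I - W̃)` and the candidate pair has value `rank W̃ + rank (I - W̃)`.
For every feasible `(Z, L)`, `rank Z + rank L ≥ rank (X Z + L X) = rank X = r`, with equality at
`(V Vᵀ, 0)`; so the pair is optimal iff `rank W̃ + rank (I - W̃) ≤ r`. As the ranges of `W̃` and
`I - W̃` always span, this forces them to be independent, and `W̃ (I - W̃) = (I - W̃) W̃` lies in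
both, hence vanishes.
-/

open Module

namespace Matrix

variable {K : Type*} [Field K] {l m n o : Type*}

theorem rank_add_le [Fintype n] (A B : Matrix m n K) : (A + B).rank ≤ A.rank + B.rank := by
  rw [rank, rank, rank, mulVecLin_add]
  exact (Submodule.finrank_mono (LinearMap.range_add_le _ _)).trans
    (Submodule.finrank_add_le_finrank_add_finrank _ _)

theorem rank_mul_mul_of_mul_eq_one [Fintype l] [Fintype m] [Fintype n] [Fintype o]
    [DecidableEq m] [DecidableEq n] {A : Matrix l m K} {A' : Matrix m l K}
    {B : Matrix n o K} {B' : Matrix o n K} (hA : A' * A = 1) (hB : B * B' = 1)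
    (M : Matrix m n K) : (A * M * B).rank = M.rank := by
  refine le_antisymm ((rank_mul_le_left _ _).trans (rank_mul_le_right _ _)) ?_
  calc M.rank = (A' * (A * M * B) * B').rank := by
        rw [Matrix.mul_assoc, Matrix.mul_assoc, hB, Matrix.mul_one, ← Matrix.mul_assoc, hA,
          Matrix.one_mul]
    _ ≤ (A * M * B).rank := (rank_mul_le_left _ _).trans (rank_mul_le_right _ _)

theorem isIdempotentElem_iff_rank_add_rank_one_sub_le [Fintype n] [DecidableEq n]
    {W : Matrix n n K} : IsIdempotentElem W ↔ W.rank + (1 - W).rank ≤ Fintype.card n := by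
  refine ⟨fun h => rank_add_rank_le_card_of_mul_eq_zero (by rw [mul_sub, mul_one, h.eq, sub_self]),
    fun h => ?_⟩
  set P := LinearMap.range W.mulVecLin
  set Q := LinearMap.range (1 - W).mulVecLin
  have hsup : P ⊔ Q = ⊤ := eq_top_iff.2 fun v _ => Submodule.mem_sup.2
    ⟨W *ᵥ v, ⟨v, rfl⟩, (1 - W) *ᵥ v, ⟨v, rfl⟩, by simp [sub_mulVec]⟩
  have hinf : P ⊓ Q = ⊥ := by
    have hdim := Submodule.finrank_sup_add_finrank_inf_eq P Q
    rw [hsup, finrank_top, finrank_fintype_fun_eq_card] at hdim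
    change finrank K P + finrank K Q ≤ _ at h
    exact Submodule.finrank_eq_zero.1 (by omega)
  have hzero : W * (1 - W) = 0 := ext_of_mulVec_single fun i => by
    rw [zero_mulVec, ← Submodule.mem_bot K, ← hinf]
    exact ⟨⟨(1 - W) *ᵥ Pi.single i 1, mulVec_mulVec _ _ _⟩,
      ⟨W *ᵥ Pi.single i 1, by
        rw [mulVecLin_apply, mulVec_mulVec, sub_mul, mul_sub, one_mul, mul_one]⟩⟩
  rw [mul_sub, mul_one, sub_eq_zero] at hzero
  exact hzero.symm

theorem rank_le_rank_add_rank_of_eq_mul_add_mul [Fintype m] [Fintype n] {X : Matrix m n K}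
    {Z : Matrix n n K} {L : Matrix m m K} (h : X = X * Z + L * X) : X.rank ≤ Z.rank + L.rank :=
  calc X.rank = (X * Z + L * X).rank := congrArg rank h
    _ ≤ (X * Z).rank + (L * X).rank := rank_add_le _ _
    _ ≤ Z.rank + L.rank := add_le_add (rank_mul_le_right _ _) (rank_mul_le_left _ _)

theorem rank_eq_rank_mul_of_forall_rank_le [Fintype m] [Fintype n] {X : Matrix m n K}
    {P : Matrix n m K} (hP : X * P * X = X) {L : Matrix l m K}
    (hL : ∀ L' : Matrix l m K, L * X = L' * X → L.rank ≤ L'.rank) :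
    L.rank = (L * X).rank := by
  have hLXP : L * X = L * X * P * X := by
    rw [Matrix.mul_assoc, Matrix.mul_assoc, ← Matrix.mul_assoc X, hP]
  exact le_antisymm ((hL _ hLXP).trans (rank_mul_le_left _ _)) (rank_mul_le_left _ _)

end Matrix

namespace IsSkinnySVD

variable {m n r : ℕ} {X : Matrix (Fin m) (Fin n) ℝ} {U : Matrix (Fin m) (Fin r) ℝ} {σ : Fin r → ℝ}
  {V : Matrix (Fin n) (Fin r) ℝ}

theorem isUnit_det_diagonal (h : IsSkinnySVD X U σ V) : IsUnit (diagonal σ).det := by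
  obtain ⟨-, -, hσ, -, -⟩ := h
  exact (isUnit_iff_isUnit_det _).1 (isUnit_diagonal.2 (Pi.isUnit_iff.2 fun i => (hσ i).ne'.isUnit))

theorem mul_mul_transpose_eq_self (h : IsSkinnySVD X U σ V) : X * (V * Vᵀ) = X := by
  obtain ⟨-, hV, -, rfl, -⟩ := h
  rw [Matrix.mul_assoc, ← Matrix.mul_assoc Vᵀ, hV, Matrix.one_mul]

theorem mul_pinv_mul (h : IsSkinnySVD X U σ V) : X * (V * (diagonal σ)⁻¹ * Uᵀ) * X = X := by
  have hD := h.isUnit_det_diagonal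
  obtain ⟨hU, hV, -, rfl, -⟩ := h
  simp only [Matrix.mul_assoc]
  rw [← Matrix.mul_assoc Vᵀ, hV, Matrix.one_mul, ← Matrix.mul_assoc Uᵀ, hU, Matrix.one_mul,
    ← Matrix.mul_assoc (diagonal σ), mul_nonsing_inv _ hD, Matrix.one_mul]

theorem sub_mul_mul_transpose (h : IsSkinnySVD X U σ V) (W : Matrix (Fin r) (Fin r) ℝ) :
    X - X * (V * W * Vᵀ) = U * (diagonal σ * (1 - W)) * Vᵀ := by
  obtain ⟨-, hV, -, rfl, -⟩ := h
  simp only [Matrix.mul_assoc]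
  rw [← Matrix.mul_assoc Vᵀ, hV, Matrix.one_mul, Matrix.sub_mul, Matrix.one_mul, Matrix.mul_sub,
    Matrix.mul_sub]

end IsSkinnySVD

theorem stmt5_general {m n r : ℕ} (X : Matrix (Fin m) (Fin n) ℝ)
    (UX : Matrix (Fin m) (Fin r) ℝ) (σX : Fin r → ℝ) (VX : Matrix (Fin n) (Fin r) ℝ)
    (hsvd : IsSkinnySVD X UX σX VX)
    (W : Matrix (Fin r) (Fin r) ℝ)
    (Ls : Matrix (Fin m) (Fin m) ℝ)
    (hLfeas : X - X * (VX * W * VXᵀ) = Ls * X)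
    (hLopt : ∀ L : Matrix (Fin m) (Fin m) ℝ,
      X - X * (VX * W * VXᵀ) = L * X → Ls.rank ≤ L.rank) :
    (X = X * (VX * W * VXᵀ) + Ls * X ∧
      ∀ (Z : Matrix (Fin n) (Fin n) ℝ) (L : Matrix (Fin m) (Fin m) ℝ),
        X = X * Z + L * X → (VX * W * VXᵀ).rank + Ls.rank ≤ Z.rank + L.rank)
    ↔ W * W = W := by
  have ⟨hU, hV, _, _, hrank⟩ := hsvd
  have hrankZ : (VX * W * VXᵀ).rank = W.rank := rank_mul_mul_of_mul_eq_one hV hV W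
  have hrankL : Ls.rank = (1 - W).rank := by
    rw [rank_eq_rank_mul_of_forall_rank_le hsvd.mul_pinv_mul fun L hL => hLopt L (hLfeas.trans hL),
      ← hLfeas, hsvd.sub_mul_mul_transpose, rank_mul_mul_of_mul_eq_one hU hV,
      rank_mul_eq_right_of_isUnit_det _ _ hsvd.isUnit_det_diagonal]
  have hidem : W * W = W ↔ W.rank + (1 - W).rank ≤ r :=
    isIdempotentElem_iff_rank_add_rank_one_sub_le.trans (by rw [Fintype.card_fin])
  rw [hrankZ, hrankL, hidem]
  constructor
  · rintro ⟨-, hopt⟩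
    have hVVt := hopt (VX * VXᵀ) 0 <| by
      rw [Matrix.zero_mul, add_zero, hsvd.mul_mul_transpose_eq_self]
    rw [rank_zero, add_zero] at hVVt
    exact hVVt.trans ((rank_mul_le_left _ _).trans (rank_le_width _))
  · intro hW
    refine ⟨by rw [← hLfeas, add_sub_cancel], fun Z L hZL => ?_⟩
    exact hW.trans (hrank ▸ rank_le_rank_add_rank_of_eq_mul_add_mul hZL)

/-- Let `L*` be optimal for `min rank L` s.t. `X − X V_X W̃ V_Xᵀ = L X`. Then
`(V_X W̃ V_Xᵀ, L*)` is optimal for the original LatLRR problem iff `W̃` is idempotent. -/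
theorem stmt5 {m n r : ℕ} (X : Matrix (Fin m) (Fin n) ℝ) (hX : X ≠ 0)
    (UX : Matrix (Fin m) (Fin r) ℝ) (σX : Fin r → ℝ) (VX : Matrix (Fin n) (Fin r) ℝ)
    (hsvd : IsSkinnySVD X UX σX VX)
    (W : Matrix (Fin r) (Fin r) ℝ)
    (Ls : Matrix (Fin m) (Fin m) ℝ)
    (hLfeas : X - X * (VX * W * VXᵀ) = Ls * X)
    (hLopt : ∀ L : Matrix (Fin m) (Fin m) ℝ,
      X - X * (VX * W * VXᵀ) = L * X → Ls.rank ≤ L.rank) :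
    (X = X * (VX * W * VXᵀ) + Ls * X ∧
      ∀ (Z : Matrix (Fin n) (Fin n) ℝ) (L : Matrix (Fin m) (Fin m) ℝ),
        X = X * Z + L * X → (VX * W * VXᵀ).rank + Ls.rank ≤ Z.rank + L.rank)
    ↔ W * W = W :=
  stmt5_general X UX σX VX hsvd W Ls hLfeas hLopt
end

section
/- The unconstrained optimization problem of minimizing f(Z) = ‖Z‖_* + ‖X (I − Z) X†‖_* over all n×n matrices Z has minimum objective function value equal to rank(X). -/
open Matrix

/-!
For every contraction `M`, `tr (M A) ≤ ‖A‖_*`: expand the trace in an orthonormal eigenbasis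
`(uᵢ)` of `Aᵀ A` with eigenvalues `λᵢ`, where `uᵢ ⬝ M A uᵢ ≤ ‖Mᵀ uᵢ‖ ‖A uᵢ‖ ≤ √λᵢ`.
Now `Q = X† X` is an orthogonal projection, so `‖Q‖_* = tr Q = rank Q = rank X`, and
`tr (Q Z) + tr (X (I - Z) X†) = tr Q` for every `Z`. Applying the bound with `M = Q` and `M = I`
gives `f Z ≥ rank X`, and `Z = Q` attains it because `X (I - Q) = 0`.
-/

lemma Real.dotProduct_le_sqrt_mul_sqrt {ι : Type*} [Fintype ι] (x y : ι → ℝ) :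
    x ⬝ᵥ y ≤ √(x ⬝ᵥ x) * √(y ⬝ᵥ y) := by
  simpa [dotProduct, sq] using Real.sum_mul_le_sqrt_mul_sqrt Finset.univ x y

lemma IsStarProjection.vecMul_dotProduct_self_le {n : Type*} [Fintype n] {Q : Matrix n n ℝ}
    (hQ : IsStarProjection Q) (v : n → ℝ) :
    (v ᵥ* Q) ⬝ᵥ (v ᵥ* Q) ≤ v ⬝ᵥ v := by
  set w := v ᵥ* Q
  have hQt : Qᵀ = Q := by
    rw [← conjTranspose_eq_transpose_of_trivial]; exact hQ.isSelfAdjoint.isHermitian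
  have hw : w ⬝ᵥ w = v ⬝ᵥ w := by
    rw [← dotProduct_mulVec, ← vecMul_transpose, hQt, vecMul_vecMul, hQ.isIdempotentElem.eq]
  have h := dotProduct_star_self_nonneg (v - w)
  rw [star_trivial, sub_dotProduct, dotProduct_sub, dotProduct_sub, dotProduct_comm w v] at h
  linarith

section

variable {m n : Type*} [Fintype m] [Fintype n] [DecidableEq n]

lemma Matrix.trace_eq_sum_dotProduct_mulVec {ι : Type*} [Fintype ι] (B : Matrix n n ℝ)
    (b : OrthonormalBasis ι ℝ (EuclideanSpace ℝ n)) :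
    B.trace = ∑ i, (b i).ofLp ⬝ᵥ (B *ᵥ (b i).ofLp) := by
  have h := LinearMap.trace_eq_sum_inner (toEuclideanLin B) b
  rw [toEuclideanLin_eq_toLin_orthonormal, LinearMap.trace_eq_matrix_trace ℝ
    (EuclideanSpace.basisFun n ℝ).toBasis, LinearMap.toMatrix_toLin] at h
  simp [h, ← toEuclideanLin_eq_toLin_orthonormal, EuclideanSpace.inner_eq_star_dotProduct,
    dotProduct_comm]

lemma nuclearNorm_eq_sum_sqrt_eigenvalues {A : Matrix m n ℝ} {B : Matrix n n ℝ}
    (hB : B.IsHermitian) (h : Aᴴ * A = B) : nuclearNorm A = ∑ i, √(hB.eigenvalues i) := by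
  subst h; rfl

@[simp]
lemma nuclearNorm_zero : nuclearNorm (0 : Matrix m n ℝ) = 0 := by
  rw [nuclearNorm_eq_sum_sqrt_eigenvalues isHermitian_zero (by simp),
    isHermitian_zero.eigenvalues_eq_zero_iff.mpr rfl]
  simp

lemma trace_mul_le_nuclearNorm (M : Matrix n m ℝ) (A : Matrix m n ℝ)
    (hM : ∀ v, (v ᵥ* M) ⬝ᵥ (v ᵥ* M) ≤ v ⬝ᵥ v) : (M * A).trace ≤ nuclearNorm A := by
  set S := isHermitian_conjTranspose_mul_self A
  rw [trace_eq_sum_dotProduct_mulVec _ S.eigenvectorBasis, nuclearNorm]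
  refine Finset.sum_le_sum fun i _ => ?_
  set u := (S.eigenvectorBasis i).ofLp
  have hu : u ⬝ᵥ u = 1 := by
    have h := S.eigenvectorBasis.inner_eq_one i
    rwa [EuclideanSpace.inner_eq_star_dotProduct, star_trivial] at h
  have hAu : (A *ᵥ u) ⬝ᵥ (A *ᵥ u) = S.eigenvalues i := by
    rw [dotProduct_mulVec, ← mulVec_transpose, mulVec_mulVec,
      ← conjTranspose_eq_transpose_of_trivial A, S.mulVec_eigenvectorBasis, smul_dotProduct, hu,
      smul_eq_mul, mul_one]
  calc u ⬝ᵥ (M * A) *ᵥ u = (u ᵥ* M) ⬝ᵥ (A *ᵥ u) := by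
        rw [← mulVec_mulVec, dotProduct_mulVec]
    _ ≤ √((u ᵥ* M) ⬝ᵥ (u ᵥ* M)) * √((A *ᵥ u) ⬝ᵥ (A *ᵥ u)) :=
        Real.dotProduct_le_sqrt_mul_sqrt _ _
    _ ≤ 1 * √(S.eigenvalues i) := by
        rw [hAu]
        gcongr
        exact Real.sqrt_le_one.mpr (hu ▸ hM u)
    _ = √(S.eigenvalues i) := one_mul _

namespace IsStarProjection

variable {Q : Matrix n n ℝ}

lemma eigenvalues_eq_zero_or_one (hQ : IsStarProjection Q) (i : n) :
    hQ.isSelfAdjoint.isHermitian.eigenvalues i = 0 ∨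
      hQ.isSelfAdjoint.isHermitian.eigenvalues i = 1 := by
  simpa using hQ.isIdempotentElem.spectrum_subset ℝ
    (hQ.isSelfAdjoint.isHermitian.eigenvalues_mem_spectrum_real i)

lemma trace_eq_rank (hQ : IsStarProjection Q) : Q.trace = Q.rank := by
  rw [hQ.isSelfAdjoint.isHermitian.trace_eq_sum_eigenvalues,
    hQ.isSelfAdjoint.isHermitian.rank_eq_card_non_zero_eigs, Fintype.card_subtype,
    ← Finset.sum_boole]
  refine Finset.sum_congr rfl fun i _ => ?_
  rcases hQ.eigenvalues_eq_zero_or_one i with h | h <;> simp [h]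

lemma nuclearNorm_eq_trace (hQ : IsStarProjection Q) : nuclearNorm Q = Q.trace := by
  have hQQ : Qᴴ * Q = Q := by
    rw [← star_eq_conjTranspose, hQ.isSelfAdjoint.star_eq, hQ.isIdempotentElem.eq]
  rw [nuclearNorm_eq_sum_sqrt_eigenvalues hQ.isSelfAdjoint.isHermitian hQQ,
    hQ.isSelfAdjoint.isHermitian.trace_eq_sum_eigenvalues]
  refine Finset.sum_congr rfl fun i _ => ?_
  rcases hQ.eigenvalues_eq_zero_or_one i with h | h <;> simp [h]

end IsStarProjection

end

theorem stmt10_general {m n : ℕ} (X : Matrix (Fin m) (Fin n) ℝ)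
    (P : Matrix (Fin n) (Fin m) ℝ) (hP : IsMoorePenroseInv X P) :
    IsLeast {v : ℝ | ∃ Z : Matrix (Fin n) (Fin n) ℝ,
      v = nuclearNorm Z + nuclearNorm (X * (1 - Z) * P)} (X.rank : ℝ) := by
  obtain ⟨hXPX, hPXP, -, hPX⟩ := hP
  have hQ : IsStarProjection (P * X) :=
    ⟨by rw [IsIdempotentElem, ← Matrix.mul_assoc, hPXP],
      by rw [IsSelfAdjoint, star_eq_conjTranspose, conjTranspose_eq_transpose_of_trivial, hPX]⟩
  have hXQ : X * (P * X) = X := by rw [← Matrix.mul_assoc, hXPX]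
  have hrank : (P * X).rank = X.rank := by
    refine le_antisymm (rank_mul_le_right P X) ?_
    simpa only [hXQ] using rank_mul_le_right X (P * X)
  have htrace : (P * X).trace = X.rank := by rw [hQ.trace_eq_rank, hrank]
  refine ⟨⟨P * X, ?_⟩, ?_⟩
  · rw [Matrix.mul_sub, Matrix.mul_one, hXQ, sub_self, Matrix.zero_mul, nuclearNorm_zero,
      add_zero, hQ.nuclearNorm_eq_trace, htrace]
  · rintro _ ⟨Z, rfl⟩
    have hsplit : (P * X * Z).trace + (X * (1 - Z) * P).trace = (P * X).trace := by
      rw [Matrix.mul_sub, Matrix.mul_one, Matrix.sub_mul, trace_sub, trace_mul_comm X P,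
        Matrix.mul_assoc X Z P, trace_mul_comm X (Z * P), Matrix.mul_assoc Z P X,
        trace_mul_comm Z (P * X), add_sub_cancel]
    have hZ := trace_mul_le_nuclearNorm (P * X) Z hQ.vecMul_dotProduct_self_le
    have hR := trace_mul_le_nuclearNorm 1 (X * (1 - Z) * P) (by simp)
    rw [Matrix.one_mul] at hR
    linarith

/-- The unconstrained problem `min_Z ‖Z‖_* + ‖X (I − Z) X†‖_*` has minimum value
`rank X`. -/
theorem stmt10 {m n : ℕ} (X : Matrix (Fin m) (Fin n) ℝ) (hX : X ≠ 0)
    (P : Matrix (Fin n) (Fin m) ℝ) (hP : IsMoorePenroseInv X P) :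
    IsLeast {v : ℝ | ∃ Z : Matrix (Fin n) (Fin n) ℝ,
      v = nuclearNorm Z + nuclearNorm (X * (1 - Z) * P)} (X.rank : ℝ) :=
  stmt10_general X P hP
end

section
/- The set of optimal solutions to the unconstrained problem of minimizing f(Z) = ‖Z‖_* + ‖X (I − Z) X†‖_* is exactly { Z* = V_X Ŵ V_Xᵀ }, where Ŵ ranges over all matrices of size rank(X) satisfying: (1) Ŵ is block diagonal compatibly with Σ_X, i.e., [Ŵ]_{ij} = 0 whenever [Σ_X]_{ii} ≠ [Σ_X]_{jj}; and (2) both Ŵ and I − Ŵ are symmetric positive semi-definite. -/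
open Matrix

lemma Matrix.dotProduct_self_nonneg {n R : Type*} [Fintype n] [Ring R] [LinearOrder R]
    [IsStrictOrderedRing R] (v : n → R) : 0 ≤ v ⬝ᵥ v :=
  Finset.sum_nonneg fun i _ => mul_self_nonneg (v i)

section RealMatrix

variable {n p k : Type*} [Fintype p]

lemma Matrix.PosSemidef.transpose_eq {M : Matrix n n ℝ} (hM : M.PosSemidef) : Mᵀ = M := by
  rw [← conjTranspose_eq_transpose_of_trivial]
  exact hM.isHermitian.eq

lemma Matrix.PosSemidef.mul_mul_transpose_same [Fintype n] {M : Matrix n n ℝ} (hM : M.PosSemidef)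
    (B : Matrix p n ℝ) : (B * M * Bᵀ).PosSemidef := by
  simpa only [conjTranspose_eq_transpose_of_trivial] using hM.mul_mul_conjTranspose_same B

lemma Matrix.posSemidef_transpose_mul_self [Fintype n] (A : Matrix p n ℝ) :
    (Aᵀ * A).PosSemidef := by
  simpa only [conjTranspose_eq_transpose_of_trivial] using posSemidef_conjTranspose_mul_self A

lemma Matrix.eq_zero_of_transpose_mul_self_eq_zero {A : Matrix p n ℝ} (h : Aᵀ * A = 0) :
    A = 0 := by
  rw [← conjTranspose_eq_transpose_of_trivial] at h
  exact conjTranspose_mul_self_eq_zero.mp h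

lemma Matrix.transpose_mul_apply_eq_dotProduct (A : Matrix p n ℝ) (B : Matrix p k ℝ)
    (i : n) (j : k) : (Aᵀ * B) i j = Aᵀ i ⬝ᵥ Bᵀ j :=
  rfl

lemma Matrix.PosSemidef.one_sub_transpose_mul_self_mul [Fintype n] [Fintype k] [DecidableEq n]
    [DecidableEq k] {B : Matrix p n ℝ} (hB : (1 - Bᵀ * B).PosSemidef) {C : Matrix n k ℝ}
    (hC : Cᵀ * C = 1) : (1 - (B * C)ᵀ * (B * C)).PosSemidef := by
  have h := hB.mul_mul_transpose_same Cᵀ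
  rw [transpose_transpose, Matrix.mul_sub, Matrix.sub_mul, Matrix.mul_one, hC] at h
  simpa only [transpose_mul, Matrix.mul_assoc] using h

end RealMatrix

section Vector

variable {m : Type*} [Fintype m] {a b : m → ℝ}

lemma dotProduct_self_sub_sqrt_smul_le (hb : b ⬝ᵥ b ≤ 1) :
    (a - √(a ⬝ᵥ a) • b) ⬝ᵥ (a - √(a ⬝ᵥ a) • b) ≤ 2 * √(a ⬝ᵥ a) * (√(a ⬝ᵥ a) - b ⬝ᵥ a) := by
  have hs : √(a ⬝ᵥ a) * √(a ⬝ᵥ a) = a ⬝ᵥ a := Real.mul_self_sqrt (dotProduct_self_nonneg a)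
  simp only [dotProduct_sub, sub_dotProduct, dotProduct_smul, smul_dotProduct, smul_eq_mul,
    dotProduct_comm a b]
  nlinarith [mul_self_nonneg (√(a ⬝ᵥ a))]

lemma dotProduct_le_sqrt_dotProduct_self (hb : b ⬝ᵥ b ≤ 1) : b ⬝ᵥ a ≤ √(a ⬝ᵥ a) := by
  rcases (Real.sqrt_nonneg (a ⬝ᵥ a)).eq_or_lt with hs | hs
  · have ha : a = 0 := dotProduct_self_eq_zero.mp (Real.sqrt_eq_zero'.mp hs.symm |>.antisymm
      (dotProduct_self_nonneg a))
    simp [ha]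
  · have := dotProduct_self_sub_sqrt_smul_le (a := a) hb
    nlinarith [dotProduct_self_nonneg (a - √(a ⬝ᵥ a) • b)]

lemma eq_sqrt_smul_of_dotProduct_eq (hb : b ⬝ᵥ b ≤ 1) (h : b ⬝ᵥ a = √(a ⬝ᵥ a)) :
    a = √(a ⬝ᵥ a) • b := by
  have hle := dotProduct_self_sub_sqrt_smul_le (a := a) hb
  rw [h, sub_self, mul_zero] at hle
  exact sub_eq_zero.mp (dotProduct_self_eq_zero.mp (hle.antisymm (dotProduct_self_nonneg _)))

end Vector

section NuclearNorm

variable {m n : Type*} [Fintype m]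

lemma dotProduct_transpose_self_le_one [DecidableEq n] {B : Matrix m n ℝ}
    (hB : (1 - Bᵀ * B).PosSemidef) (i : n) : Bᵀ i ⬝ᵥ Bᵀ i ≤ 1 := by
  have := hB.diag_nonneg (i := i)
  rw [Matrix.sub_apply, one_apply_eq] at this
  exact sub_nonneg.mp this

variable [Fintype n]

lemma trace_transpose_mul_le_sum_sqrt [DecidableEq n] {A B : Matrix m n ℝ}
    (hB : (1 - Bᵀ * B).PosSemidef) : trace (Bᵀ * A) ≤ ∑ i, √(Aᵀ i ⬝ᵥ Aᵀ i) :=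
  Finset.sum_le_sum fun i _ =>
    dotProduct_le_sqrt_dotProduct_self (dotProduct_transpose_self_le_one hB i)

lemma eq_mul_diagonal_of_trace_eq_sum_sqrt [DecidableEq n] {A B : Matrix m n ℝ}
    (hB : (1 - Bᵀ * B).PosSemidef) (h : trace (Bᵀ * A) = ∑ i, √(Aᵀ i ⬝ᵥ Aᵀ i)) :
    A = B * diagonal fun i => √(Aᵀ i ⬝ᵥ Aᵀ i) := by
  have hcol : ∀ i, Bᵀ i ⬝ᵥ Aᵀ i = √(Aᵀ i ⬝ᵥ Aᵀ i) :=
    fun i => (Finset.sum_eq_sum_iff_of_le fun i _ => dotProduct_le_sqrt_dotProduct_self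
      (dotProduct_transpose_self_le_one hB i)).mp h i (Finset.mem_univ i)
  ext k i
  rw [mul_diagonal, mul_comm]
  exact congrFun (eq_sqrt_smul_of_dotProduct_eq (dotProduct_transpose_self_le_one hB i) (hcol i)) k

variable [DecidableEq n]

noncomputable def gramEigenvalues (A : Matrix m n ℝ) : n → ℝ :=
  (isHermitian_conjTranspose_mul_self A).eigenvalues

noncomputable def gramEigenvectors (A : Matrix m n ℝ) : Matrix n n ℝ :=
  (isHermitian_conjTranspose_mul_self A).eigenvectorUnitary

lemma nuclearNorm_eq_sum_sqrt_gramEigenvalues (A : Matrix m n ℝ) :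
    nuclearNorm A = ∑ i, √(gramEigenvalues A i) :=
  rfl

lemma gramEigenvalues_nonneg (A : Matrix m n ℝ) (i : n) : 0 ≤ gramEigenvalues A i :=
  (posSemidef_conjTranspose_mul_self A).eigenvalues_nonneg i

lemma gramEigenvectors_transpose_mul (A : Matrix m n ℝ) :
    (gramEigenvectors A)ᵀ * gramEigenvectors A = 1 := by
  rw [← conjTranspose_eq_transpose_of_trivial, ← star_eq_conjTranspose]
  exact mem_unitaryGroup_iff'.mp (isHermitian_conjTranspose_mul_self A).eigenvectorUnitary.2

lemma mul_gramEigenvectors_transpose (A : Matrix m n ℝ) :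
    gramEigenvectors A * (gramEigenvectors A)ᵀ = 1 := by
  rw [← conjTranspose_eq_transpose_of_trivial, ← star_eq_conjTranspose]
  exact mem_unitaryGroup_iff.mp (isHermitian_conjTranspose_mul_self A).eigenvectorUnitary.2

lemma transpose_mul_self_eq_gramEigenvectors (A : Matrix m n ℝ) :
    Aᵀ * A = gramEigenvectors A * diagonal (gramEigenvalues A) * (gramEigenvectors A)ᵀ := by
  have h := (isHermitian_conjTranspose_mul_self A).spectral_theorem
  rw [Unitary.conjStarAlgAut_apply, star_eq_conjTranspose, RCLike.ofReal_real_eq_id,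
    Function.id_comp] at h
  rw [← conjTranspose_eq_transpose_of_trivial A,
    ← conjTranspose_eq_transpose_of_trivial (gramEigenvectors A)]
  exact h

lemma transpose_mul_self_mul_gramEigenvectors (A : Matrix m n ℝ) :
    (A * gramEigenvectors A)ᵀ * (A * gramEigenvectors A) = diagonal (gramEigenvalues A) := by
  have hQ := gramEigenvectors_transpose_mul A
  calc _ = (gramEigenvectors A)ᵀ * (Aᵀ * A) * gramEigenvectors A := by
        rw [transpose_mul]; simp only [Matrix.mul_assoc]
    _ = _ := by
        rw [transpose_mul_self_eq_gramEigenvectors]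
        simp only [← Matrix.mul_assoc, hQ, Matrix.one_mul]
        rw [Matrix.mul_assoc, hQ, Matrix.mul_one]

noncomputable def sqrtGram (A : Matrix m n ℝ) : Matrix n n ℝ :=
  gramEigenvectors A * diagonal (fun i => √(gramEigenvalues A i)) * (gramEigenvectors A)ᵀ

lemma dotProduct_self_columns_mul_gramEigenvectors (A : Matrix m n ℝ) (i : n) :
    (A * gramEigenvectors A)ᵀ i ⬝ᵥ (A * gramEigenvectors A)ᵀ i = gramEigenvalues A i := by
  rw [← transpose_mul_apply_eq_dotProduct, transpose_mul_self_mul_gramEigenvectors,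
    diagonal_apply_eq]

lemma sum_sqrt_columns_mul_gramEigenvectors (A : Matrix m n ℝ) :
    ∑ i, √((A * gramEigenvectors A)ᵀ i ⬝ᵥ (A * gramEigenvectors A)ᵀ i) = nuclearNorm A := by
  simp only [dotProduct_self_columns_mul_gramEigenvectors, nuclearNorm_eq_sum_sqrt_gramEigenvalues]

lemma trace_transpose_mul_mul_gramEigenvectors (A B : Matrix m n ℝ) :
    trace ((B * gramEigenvectors A)ᵀ * (A * gramEigenvectors A)) = trace (Bᵀ * A) := by
  rw [transpose_mul, Matrix.mul_assoc, trace_mul_comm]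
  simp only [Matrix.mul_assoc, mul_gramEigenvectors_transpose, Matrix.mul_one]

lemma trace_transpose_mul_le_nuclearNorm {A B : Matrix m n ℝ} (hB : (1 - Bᵀ * B).PosSemidef) :
    trace (Bᵀ * A) ≤ nuclearNorm A := by
  rw [← trace_transpose_mul_mul_gramEigenvectors, ← sum_sqrt_columns_mul_gramEigenvectors]
  exact trace_transpose_mul_le_sum_sqrt
    (hB.one_sub_transpose_mul_self_mul (gramEigenvectors_transpose_mul A))

lemma eq_mul_sqrtGram_of_trace_eq_nuclearNorm {A B : Matrix m n ℝ}
    (hB : (1 - Bᵀ * B).PosSemidef) (h : trace (Bᵀ * A) = nuclearNorm A) :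
    A = B * sqrtGram A := by
  rw [← trace_transpose_mul_mul_gramEigenvectors, ← sum_sqrt_columns_mul_gramEigenvectors] at h
  have hAQ := eq_mul_diagonal_of_trace_eq_sum_sqrt
    (hB.one_sub_transpose_mul_self_mul (gramEigenvectors_transpose_mul A)) h
  simp only [dotProduct_self_columns_mul_gramEigenvectors] at hAQ
  calc A = A * gramEigenvectors A * (gramEigenvectors A)ᵀ := by
        rw [Matrix.mul_assoc, mul_gramEigenvectors_transpose, Matrix.mul_one]
    _ = B * sqrtGram A := by rw [hAQ, sqrtGram]; simp only [Matrix.mul_assoc]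

lemma sqrtGram_posSemidef (A : Matrix m n ℝ) : (sqrtGram A).PosSemidef :=
  (PosSemidef.diagonal fun _ => Real.sqrt_nonneg _).mul_mul_transpose_same _

lemma sqrtGram_mul_self (A : Matrix m n ℝ) : sqrtGram A * sqrtGram A = Aᵀ * A := by
  have hsq : (diagonal fun i => √(gramEigenvalues A i)) * (diagonal fun i => √(gramEigenvalues A i))
      = diagonal (gramEigenvalues A) := by
    rw [diagonal_mul_diagonal]
    exact congrArg diagonal (funext fun i => Real.mul_self_sqrt (gramEigenvalues_nonneg A i))
  rw [transpose_mul_self_eq_gramEigenvectors, sqrtGram, ← hsq]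
  simp only [Matrix.mul_assoc]
  rw [← Matrix.mul_assoc (gramEigenvectors A)ᵀ, gramEigenvectors_transpose_mul, Matrix.one_mul]

lemma trace_sqrtGram (A : Matrix m n ℝ) : trace (sqrtGram A) = nuclearNorm A := by
  rw [sqrtGram, trace_mul_cycle, gramEigenvectors_transpose_mul,
    Matrix.one_mul, trace_diagonal, nuclearNorm_eq_sum_sqrt_gramEigenvalues]

open scoped MatrixOrder in
lemma sqrtGram_eq_self {A : Matrix n n ℝ} (hA : A.PosSemidef) : sqrtGram A = A := by
  refine (CFC.mul_self_eq_mul_self_iff _ _ (sqrtGram_posSemidef A).nonneg hA.nonneg).mp ?_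
  rw [sqrtGram_mul_self, hA.transpose_eq]

lemma nuclearNorm_eq_trace {A : Matrix n n ℝ} (hA : A.PosSemidef) : nuclearNorm A = trace A := by
  rw [← trace_sqrtGram, sqrtGram_eq_self hA]

end NuclearNorm

section Isometry

variable {n p k : Type*} [Fintype p] {V : Matrix n p ℝ}

lemma transpose_mul_transpose_self (V : Matrix n p ℝ) : (V * Vᵀ)ᵀ = V * Vᵀ := by
  rw [transpose_mul, transpose_transpose]

variable [Fintype n]

lemma trace_transpose_mul_transpose_mul (V : Matrix n p ℝ) (A : Matrix n n ℝ) :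
    trace ((V * Vᵀ)ᵀ * A) = trace (Vᵀ * A * V) := by
  rw [transpose_mul_transpose_self, trace_mul_cycle Vᵀ A V]

variable [DecidableEq p]

lemma mul_transpose_mul_mul_transpose (hV : Vᵀ * V = 1) :
    V * Vᵀ * (V * Vᵀ) = V * Vᵀ := by
  rw [Matrix.mul_assoc, ← Matrix.mul_assoc Vᵀ, hV, Matrix.one_mul]

lemma transpose_mul_mul_transpose_mul_cancel (hV : Vᵀ * V = 1) (K : Matrix p p ℝ) :
    Vᵀ * (V * K * Vᵀ) * V = K := by
  simp only [← Matrix.mul_assoc]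
  rw [hV, Matrix.one_mul, Matrix.mul_assoc, hV, Matrix.mul_one]

variable [DecidableEq n]

lemma transpose_mul_one_sub_mul_transpose (hV : Vᵀ * V = 1) :
    (1 - V * Vᵀ)ᵀ * (1 - V * Vᵀ) = 1 - V * Vᵀ := by
  rw [transpose_sub, transpose_one, transpose_mul_transpose_self, Matrix.sub_mul, Matrix.one_mul,
    Matrix.mul_sub, Matrix.mul_one, mul_transpose_mul_mul_transpose hV, sub_self, sub_zero]

lemma posSemidef_one_sub_gram_mul_transpose (hV : Vᵀ * V = 1) :
    (1 - (V * Vᵀ)ᵀ * (V * Vᵀ)).PosSemidef := by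
  rw [transpose_mul_transpose_self, mul_transpose_mul_mul_transpose hV,
    ← transpose_mul_one_sub_mul_transpose hV]
  exact posSemidef_transpose_mul_self _

lemma trace_transpose_mul_mul_le_nuclearNorm (hV : Vᵀ * V = 1)
    (A : Matrix n n ℝ) : trace (Vᵀ * A * V) ≤ nuclearNorm A := by
  rw [← trace_transpose_mul_transpose_mul]
  exact trace_transpose_mul_le_nuclearNorm (posSemidef_one_sub_gram_mul_transpose hV)

lemma mul_transpose_mul_eq_self_of_gram_eq (hV : Vᵀ * V = 1) {S : Matrix n k ℝ}
    (h : (V * Vᵀ * S)ᵀ * (V * Vᵀ * S) = Sᵀ * S) : V * Vᵀ * S = S := by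
  have hgram : ((1 - V * Vᵀ) * S)ᵀ * ((1 - V * Vᵀ) * S) = 0 := by
    have h' : Sᵀ * (V * Vᵀ) * S = Sᵀ * S := by
      rw [← h, transpose_mul, transpose_mul_transpose_self]
      simp only [Matrix.mul_assoc]
      rw [← Matrix.mul_assoc Vᵀ V, hV, Matrix.one_mul]
    calc _ = Sᵀ * ((1 - V * Vᵀ)ᵀ * (1 - V * Vᵀ)) * S := by
          rw [transpose_mul]; simp only [Matrix.mul_assoc]
      _ = 0 := by
          rw [transpose_mul_one_sub_mul_transpose hV, Matrix.mul_sub, Matrix.sub_mul,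
            Matrix.mul_one, h', sub_self]
  have := eq_zero_of_transpose_mul_self_eq_zero hgram
  rwa [Matrix.sub_mul, Matrix.one_mul, sub_eq_zero, eq_comm] at this

lemma posSemidef_of_trace_transpose_mul_mul_eq_nuclearNorm (hV : Vᵀ * V = 1)
    {A : Matrix n n ℝ} (h : trace (Vᵀ * A * V) = nuclearNorm A) :
    A.PosSemidef ∧ A = V * (Vᵀ * A * V) * Vᵀ := by
  rw [← trace_transpose_mul_transpose_mul] at h
  have hA : A = V * Vᵀ * sqrtGram A :=
    eq_mul_sqrtGram_of_trace_eq_nuclearNorm (posSemidef_one_sub_gram_mul_transpose hV) h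
  have hS : A = sqrtGram A := by
    refine hA.trans (mul_transpose_mul_eq_self_of_gram_eq hV ?_)
    rw [← hA, ← sqrtGram_mul_self, (sqrtGram_posSemidef A).transpose_eq]
  have hApsd : A.PosSemidef := hS ▸ sqrtGram_posSemidef A
  rw [← hS] at hA
  have hAr : A = A * (V * Vᵀ) := by
    conv_lhs => rw [← hApsd.transpose_eq, hA, transpose_mul, hApsd.transpose_eq,
      transpose_mul_transpose_self]
  refine ⟨hApsd, ?_⟩
  calc A = V * Vᵀ * (A * (V * Vᵀ)) := by rw [← hAr, ← hA]
    _ = V * (Vᵀ * A * V) * Vᵀ := by simp only [Matrix.mul_assoc]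

end Isometry

section DiagonalConj

variable {r : Type*} [Fintype r] [DecidableEq r] {σ : r → ℝ}

lemma diagonal_mul_diagonal_inv (hσ : ∀ i, σ i ≠ 0) : diagonal σ * diagonal σ⁻¹ = 1 := by
  rw [diagonal_mul_diagonal, ← diagonal_one]
  exact congrArg diagonal (funext fun i => mul_inv_cancel₀ (hσ i))

lemma diagonal_inv_mul_diagonal (hσ : ∀ i, σ i ≠ 0) : diagonal σ⁻¹ * diagonal σ = 1 := by
  rw [diagonal_mul_diagonal, ← diagonal_one]
  exact congrArg diagonal (funext fun i => inv_mul_cancel₀ (hσ i))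

lemma diagonal_mul_mul_diagonal_inv_apply (σ : r → ℝ) (W : Matrix r r ℝ) (i j : r) :
    (diagonal σ * W * diagonal σ⁻¹) i j = σ i * W i j / σ j := by
  rw [mul_diagonal, diagonal_mul, Pi.inv_apply, div_eq_mul_inv]

lemma trace_diagonal_mul_mul_diagonal_inv (hσ : ∀ i, σ i ≠ 0) (W : Matrix r r ℝ) :
    trace (diagonal σ * W * diagonal σ⁻¹) = trace W := by
  rw [trace_mul_cycle, diagonal_inv_mul_diagonal hσ, Matrix.one_mul]

lemma diagonal_mul_mul_diagonal_inv_eq_self (hσ : ∀ i, σ i ≠ 0) {W : Matrix r r ℝ}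
    (hW : ∀ i j, σ i ≠ σ j → W i j = 0) : diagonal σ * W * diagonal σ⁻¹ = W := by
  ext i j
  rw [diagonal_mul_mul_diagonal_inv_apply]
  by_cases hij : σ i = σ j
  · rw [hij, mul_div_cancel_left₀ _ (hσ j)]
  · rw [hW i j hij, mul_zero, zero_div]

lemma eq_zero_of_transpose_diagonal_mul_mul_diagonal_inv (hσ : ∀ i, 0 < σ i)
    {W : Matrix r r ℝ} (hW : Wᵀ = W)
    (hconj : (diagonal σ * W * diagonal σ⁻¹)ᵀ = diagonal σ * W * diagonal σ⁻¹) :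
    ∀ i j, σ i ≠ σ j → W i j = 0 := by
  intro i j hij
  have hi := (hσ i).ne'
  have hj := (hσ j).ne'
  have h := congrFun (congrFun hconj j) i
  rw [transpose_apply, diagonal_mul_mul_diagonal_inv_apply, diagonal_mul_mul_diagonal_inv_apply,
    ← transpose_apply W i j, hW] at h
  field_simp at h
  have hsq : (σ i - σ j) * (σ i + σ j) * W i j = 0 := by linear_combination h
  rcases mul_eq_zero.mp hsq with hσij | hWij
  · rcases mul_eq_zero.mp hσij with hsub | hadd
    · exact absurd (sub_eq_zero.mp hsub) hij
    · linarith [hσ i, hσ j]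
  · exact hWij

end DiagonalConj

lemma IsMoorePenroseInv.unique {m n : Type*} [Fintype m] [Fintype n] {X : Matrix m n ℝ}
    {P₁ P₂ : Matrix n m ℝ} (h₁ : IsMoorePenroseInv X P₁) (h₂ : IsMoorePenroseInv X P₂) :
    P₁ = P₂ := by
  obtain ⟨a₁, b₁, c₁, d₁⟩ := h₁
  obtain ⟨a₂, b₂, c₂, d₂⟩ := h₂
  have hXP : X * P₁ = X * P₂ :=
    calc X * P₁ = (X * P₁)ᵀ := c₁.symm
      _ = ((X * P₂) * (X * P₁))ᵀ := by rw [← Matrix.mul_assoc, a₂]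
      _ = (X * P₁) * (X * P₂) := by rw [transpose_mul, c₁, c₂]
      _ = X * P₂ := by rw [← Matrix.mul_assoc, a₁]
  have hPX : P₁ * X = P₂ * X :=
    calc P₁ * X = (P₁ * X)ᵀ := d₁.symm
      _ = ((P₁ * X) * (P₂ * X))ᵀ := by rw [Matrix.mul_assoc, ← Matrix.mul_assoc X, a₂]
      _ = (P₂ * X) * (P₁ * X) := by rw [transpose_mul, d₁, d₂]
      _ = P₂ * X := by rw [Matrix.mul_assoc, ← Matrix.mul_assoc X, a₁]
  calc P₁ = P₁ * (X * P₁) := by rw [← Matrix.mul_assoc, b₁]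
    _ = (P₂ * X) * P₂ := by rw [hXP, ← Matrix.mul_assoc, hPX]
    _ = P₂ := b₂

noncomputable def nuclearObjective {m n : Type*} [Fintype m] [Fintype n] [DecidableEq m]
    [DecidableEq n] (X : Matrix m n ℝ) (P : Matrix n m ℝ) (Z : Matrix n n ℝ) : ℝ :=
  nuclearNorm Z + nuclearNorm (X * (1 - Z) * P)

namespace IsSkinnySVD

variable {m n r : ℕ} {X : Matrix (Fin m) (Fin n) ℝ} {U : Matrix (Fin m) (Fin r) ℝ}
  {σ : Fin r → ℝ} {V : Matrix (Fin n) (Fin r) ℝ} {P : Matrix (Fin n) (Fin m) ℝ}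

lemma ne_zero (h : IsSkinnySVD X U σ V) (i : Fin r) : σ i ≠ 0 :=
  (h.2.2.1 i).ne'

lemma mul_mul_pinv (h : IsSkinnySVD X U σ V) (M : Matrix (Fin n) (Fin n) ℝ) :
    X * M * (V * diagonal σ⁻¹ * Uᵀ) = U * (diagonal σ * (Vᵀ * M * V) * diagonal σ⁻¹) * Uᵀ := by
  obtain ⟨-, -, -, hX, -⟩ := h
  rw [hX]
  simp only [Matrix.mul_assoc]

lemma isMoorePenroseInv (h : IsSkinnySVD X U σ V) :
    IsMoorePenroseInv X (V * diagonal σ⁻¹ * Uᵀ) := by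
  have hσ := h.ne_zero
  obtain ⟨hU, hV, -, hX, -⟩ := h
  have hXP : X * (V * diagonal σ⁻¹ * Uᵀ) = U * Uᵀ := by
    rw [hX]
    simp only [Matrix.mul_assoc]
    rw [← Matrix.mul_assoc Vᵀ V, hV, Matrix.one_mul, ← Matrix.mul_assoc (diagonal σ),
      diagonal_mul_diagonal_inv hσ, Matrix.one_mul]
  have hPX : V * diagonal σ⁻¹ * Uᵀ * X = V * Vᵀ := by
    rw [hX]
    simp only [Matrix.mul_assoc]
    rw [← Matrix.mul_assoc Uᵀ U, hU, Matrix.one_mul, ← Matrix.mul_assoc (diagonal σ⁻¹),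
      diagonal_inv_mul_diagonal hσ, Matrix.one_mul]
  refine ⟨?_, ?_, by rw [hXP, transpose_mul_transpose_self],
    by rw [hPX, transpose_mul_transpose_self]⟩
  · rw [hXP, hX]
    simp only [← Matrix.mul_assoc]
    rw [Matrix.mul_assoc U, hU, Matrix.mul_one]
  · rw [hPX]
    simp only [← Matrix.mul_assoc]
    rw [Matrix.mul_assoc V, hV, Matrix.mul_one]

lemma eq_pinv (h : IsSkinnySVD X U σ V) (hP : IsMoorePenroseInv X P) :
    P = V * diagonal σ⁻¹ * Uᵀ :=
  hP.unique h.isMoorePenroseInv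

lemma residual_eq (h : IsSkinnySVD X U σ V) (hP : IsMoorePenroseInv X P)
    (Z : Matrix (Fin n) (Fin n) ℝ) :
    X * (1 - Z) * P = U * (1 - diagonal σ * (Vᵀ * Z * V) * diagonal σ⁻¹) * Uᵀ := by
  have ⟨_, hV, _, _, _⟩ := h
  rw [h.eq_pinv hP, h.mul_mul_pinv, Matrix.mul_sub, Matrix.sub_mul, Matrix.mul_one, hV,
    Matrix.mul_sub, Matrix.sub_mul, Matrix.mul_one, diagonal_mul_diagonal_inv h.ne_zero]

lemma trace_transpose_mul_residual_mul (h : IsSkinnySVD X U σ V) (hP : IsMoorePenroseInv X P)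
    (Z : Matrix (Fin n) (Fin n) ℝ) :
    trace (Uᵀ * (X * (1 - Z) * P) * U) = r - trace (Vᵀ * Z * V) := by
  have ⟨hU, _, _, _, _⟩ := h
  rw [h.residual_eq hP, transpose_mul_mul_transpose_mul_cancel hU, trace_sub, trace_one,
    Fintype.card_fin, trace_diagonal_mul_mul_diagonal_inv h.ne_zero]

lemma card_le_nuclearObjective (h : IsSkinnySVD X U σ V) (hP : IsMoorePenroseInv X P)
    (Z : Matrix (Fin n) (Fin n) ℝ) : (r : ℝ) ≤ nuclearObjective X P Z := by
  have ⟨hU, hV, _, _, _⟩ := h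
  have hZ := trace_transpose_mul_mul_le_nuclearNorm hV Z
  have hR := trace_transpose_mul_mul_le_nuclearNorm hU (X * (1 - Z) * P)
  rw [h.trace_transpose_mul_residual_mul hP] at hR
  rw [nuclearObjective]
  linarith

lemma nuclearObjective_eq_card (h : IsSkinnySVD X U σ V) (hP : IsMoorePenroseInv X P)
    {W : Matrix (Fin r) (Fin r) ℝ} (hblock : ∀ i j, σ i ≠ σ j → W i j = 0) (hW : W.PosSemidef)
    (hW' : (1 - W).PosSemidef) : nuclearObjective X P (V * W * Vᵀ) = r := by
  have ⟨hU, hV, _, _, _⟩ := h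
  have hR : X * (1 - V * W * Vᵀ) * P = U * (1 - W) * Uᵀ := by
    rw [h.residual_eq hP, transpose_mul_mul_transpose_mul_cancel hV,
      diagonal_mul_mul_diagonal_inv_eq_self h.ne_zero hblock]
  rw [nuclearObjective, hR, nuclearNorm_eq_trace (hW.mul_mul_transpose_same V),
    nuclearNorm_eq_trace (hW'.mul_mul_transpose_same U), trace_mul_cycle, hV, Matrix.one_mul,
    trace_mul_cycle, hU, Matrix.one_mul, trace_sub, trace_one, Fintype.card_fin]
  ring

lemma exists_of_nuclearObjective_le_card (h : IsSkinnySVD X U σ V) (hP : IsMoorePenroseInv X P)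
    {Z : Matrix (Fin n) (Fin n) ℝ} (hZ : nuclearObjective X P Z ≤ r) :
    ∃ W : Matrix (Fin r) (Fin r) ℝ, (∀ i j, σ i ≠ σ j → W i j = 0) ∧
      W.PosSemidef ∧ (1 - W).PosSemidef ∧ Z = V * W * Vᵀ := by
  have ⟨hU, hV, hσ, _, _⟩ := h
  have hZle := trace_transpose_mul_mul_le_nuclearNorm hV Z
  have hRle := trace_transpose_mul_mul_le_nuclearNorm hU (X * (1 - Z) * P)
  have hRtr := h.trace_transpose_mul_residual_mul hP Z
  rw [nuclearObjective] at hZ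
  obtain ⟨hZpsd, hZeq⟩ := posSemidef_of_trace_transpose_mul_mul_eq_nuclearNorm hV
    (show trace (Vᵀ * Z * V) = nuclearNorm Z by linarith)
  obtain ⟨hRpsd, -⟩ := posSemidef_of_trace_transpose_mul_mul_eq_nuclearNorm hU
    (show trace (Uᵀ * (X * (1 - Z) * P) * U) = nuclearNorm (X * (1 - Z) * P) by linarith)
  set W := Vᵀ * Z * V
  have hWpsd : W.PosSemidef := by simpa using hZpsd.mul_mul_transpose_same Vᵀ
  have hconj : (1 - diagonal σ * W * diagonal σ⁻¹).PosSemidef := by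
    have := hRpsd.mul_mul_transpose_same Uᵀ
    rwa [transpose_transpose, h.residual_eq hP, transpose_mul_mul_transpose_mul_cancel hU] at this
  have hblock := eq_zero_of_transpose_diagonal_mul_mul_diagonal_inv hσ hWpsd.transpose_eq
    (by simpa only [transpose_sub, transpose_one, sub_right_inj] using hconj.transpose_eq)
  rw [diagonal_mul_mul_diagonal_inv_eq_self h.ne_zero hblock] at hconj
  exact ⟨W, hblock, hWpsd, hconj, hZeq⟩

end IsSkinnySVD

theorem stmt13_general {m n r : ℕ} (X : Matrix (Fin m) (Fin n) ℝ)
    (P : Matrix (Fin n) (Fin m) ℝ) (hP : IsMoorePenroseInv X P)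
    (UX : Matrix (Fin m) (Fin r) ℝ) (σX : Fin r → ℝ) (VX : Matrix (Fin n) (Fin r) ℝ)
    (hsvd : IsSkinnySVD X UX σX VX)
    (Zs : Matrix (Fin n) (Fin n) ℝ) :
    (∀ Z : Matrix (Fin n) (Fin n) ℝ,
      nuclearNorm Zs + nuclearNorm (X * (1 - Zs) * P)
        ≤ nuclearNorm Z + nuclearNorm (X * (1 - Z) * P))
    ↔ ∃ W : Matrix (Fin r) (Fin r) ℝ,
        (∀ i j, σX i ≠ σX j → W i j = 0) ∧
        W.PosSemidef ∧ (1 - W).PosSemidef ∧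
        Zs = VX * W * VXᵀ := by
  have hone : nuclearObjective X P (VX * (1 : Matrix (Fin r) (Fin r) ℝ) * VXᵀ) = r :=
    hsvd.nuclearObjective_eq_card hP (fun _ _ hij => one_apply_ne (ne_of_apply_ne σX hij))
      PosSemidef.one (by rw [sub_self]; exact PosSemidef.zero)
  constructor
  · intro hopt
    exact hsvd.exists_of_nuclearObjective_le_card hP ((hopt _).trans hone.le)
  · rintro ⟨W, hblock, hW, hW', rfl⟩ Z
    exact (hsvd.nuclearObjective_eq_card hP hblock hW hW').trans_le
      (hsvd.card_le_nuclearObjective hP Z)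

/-- Complete solutions to `min_Z ‖Z‖_* + ‖X (I − Z) X†‖_*`: `Z*` is optimal iff
`Z* = V_X Ŵ V_Xᵀ` where `Ŵ` is block diagonal compatibly with `Σ_X` and both `Ŵ`
and `I − Ŵ` are symmetric positive semi-definite. -/
theorem stmt13 {m n r : ℕ} (X : Matrix (Fin m) (Fin n) ℝ) (hX : X ≠ 0)
    (P : Matrix (Fin n) (Fin m) ℝ) (hP : IsMoorePenroseInv X P)
    (UX : Matrix (Fin m) (Fin r) ℝ) (σX : Fin r → ℝ) (VX : Matrix (Fin n) (Fin r) ℝ)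
    (hsvd : IsSkinnySVD X UX σX VX)
    (Zs : Matrix (Fin n) (Fin n) ℝ) :
    (∀ Z : Matrix (Fin n) (Fin n) ℝ,
      nuclearNorm Zs + nuclearNorm (X * (1 - Zs) * P)
        ≤ nuclearNorm Z + nuclearNorm (X * (1 - Z) * P))
    ↔ ∃ W : Matrix (Fin r) (Fin r) ℝ,
        (∀ i j, σX i ≠ σX j → W i j = 0) ∧
        W.PosSemidef ∧ (1 - W).PosSemidef ∧
        Zs = VX * W * VXᵀ :=
  stmt13_general X P hP UX σX VX hsvd Zs
end

section
/- If Ŵ is a square matrix of size rank(X) that is not idempotent (Ŵ² ≠ Ŵ), then Z* = V_X Ŵ V_Xᵀ cannot be written in the form Z* = V_X W̃ V_Xᵀ + S₁ W̃ V_Xᵀ with W̃ an idempotent matrix and S₁ a matrix satisfying V_Xᵀ S₁ = 0 and rank(S₁) ≤ rank(W̃). -/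
open Matrix

namespace Matrix

variable {R : Type*} [Semiring R] {n r : Type*} [Fintype n] [Fintype r] [DecidableEq r]

theorem mul_mul_mul_mul_of_mul_eq_one {V : Matrix n r R} {L : Matrix r n R} (hLV : L * V = 1)
    (W : Matrix r r R) : L * (V * W * L) * V = W := by
  simp only [Matrix.mul_assoc, ← Matrix.mul_assoc L V, hLV, Matrix.one_mul, Matrix.mul_one]

theorem eq_of_mul_mul_eq_add {V S : Matrix n r R} {L : Matrix r n R} (hLV : L * V = 1)
    (hLS : L * S = 0) {W W' : Matrix r r R} (h : V * W * L = V * W' * L + S * W' * L) :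
    W = W' := by
  calc W = L * (V * W * L) * V := (mul_mul_mul_mul_of_mul_eq_one hLV W).symm
    _ = L * (V * W' * L) * V + L * S * (W' * L * V) := by
        rw [h, Matrix.mul_add, Matrix.add_mul]; simp only [Matrix.mul_assoc]
    _ = W' := by rw [mul_mul_mul_mul_of_mul_eq_one hLV, hLS, Matrix.zero_mul, add_zero]

end Matrix

theorem stmt15_general {m n r : ℕ} (X : Matrix (Fin m) (Fin n) ℝ)
    (UX : Matrix (Fin m) (Fin r) ℝ) (σX : Fin r → ℝ) (VX : Matrix (Fin n) (Fin r) ℝ)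
    (hsvd : IsSkinnySVD X UX σX VX)
    (W : Matrix (Fin r) (Fin r) ℝ) (hW : W * W ≠ W) :
    ¬ ∃ (Wt : Matrix (Fin r) (Fin r) ℝ) (S₁ : Matrix (Fin n) (Fin r) ℝ),
        Wt * Wt = Wt ∧ VXᵀ * S₁ = 0 ∧ S₁.rank ≤ Wt.rank ∧
        VX * W * VXᵀ = VX * Wt * VXᵀ + S₁ * Wt * VXᵀ := by
  rintro ⟨Wt, S₁, hWt, hVS, -, heq⟩
  obtain rfl : W = Wt := eq_of_mul_mul_eq_add hsvd.2.1 hVS heq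
  exact hW hWt

/-- If `Ŵ` is not idempotent, then `V_X Ŵ V_Xᵀ` cannot be written as
`V_X W̃ V_Xᵀ + S₁ W̃ V_Xᵀ` with `W̃` idempotent, `V_Xᵀ S₁ = 0` and
`rank S₁ ≤ rank W̃`. -/
theorem stmt15 {m n r : ℕ} (X : Matrix (Fin m) (Fin n) ℝ) (hX : X ≠ 0)
    (UX : Matrix (Fin m) (Fin r) ℝ) (σX : Fin r → ℝ) (VX : Matrix (Fin n) (Fin r) ℝ)
    (hsvd : IsSkinnySVD X UX σX VX)
    (W : Matrix (Fin r) (Fin r) ℝ) (hW : W * W ≠ W) :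
    ¬ ∃ (Wt : Matrix (Fin r) (Fin r) ℝ) (S₁ : Matrix (Fin n) (Fin r) ℝ),
        Wt * Wt = Wt ∧ VXᵀ * S₁ = 0 ∧ S₁.rank ≤ Wt.rank ∧
        VX * W * VXᵀ = VX * Wt * VXᵀ + S₁ * Wt * VXᵀ :=
  stmt15_general X UX σX VX hsvd W hW
end
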